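/- Let f ∈ S_1 with C = sup_n n|Δf(n)| < ∞. Define the operator A₁ on ℓ₂(Δ) by (A₁c)_n = i f(n) c_n with domain D(A₁) = {c ∈ ℓ₂(Δ) : (f(n)c_n) ∈ ℓ₂(Δ)}. Then the spectrum of A₁ equals its point spectrum and equals {i f(n) : n ∈ ℕ}, and for λ ∉ {i f(n)} the resolvent is the diagonal operator ((A₁ − λ)^{-1}c)_n = c_n/(i f(n) − λ). -/

import Mathlib

/-!
Eigenvectors are the unit sequences `Pi.single n 1`. For `λ ∉ {i f(n)}` the symbol
`X n = i f(n) - λ` is bounded below by some `δ > 0` for `n ≥ 1`, since `f → ∞`, and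
`n |Δ(X⁻¹)(n)| ≤ n |Δf(n)| / δ²` is bounded. A multiplier `w` with `w` and `n |Δw(n)|` bounded
is bounded on `ℓ₂(Δ)`: `Δ(wc)(n) = w(n+1) Δc(n) + c(n) Δw(n)`, and as `c(n) = ∑_{k<n} Δc(k)`,
the second term is dominated by the Cesàro mean of `|Δc|`, which the discrete Hardy inequality
`∑ (A_n / n)² ≤ 4 ∑ a_n²` controls.
-/

open Filter Topology

/-- Membership in `ℓ₂(Δ)`: `c 0 = 0` (the sequence is `(c_n)_{n≥1}`) and the
difference sequence is square-summable. -/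
def InSp (c : ℕ → ℂ) : Prop := c 0 = 0 ∧ Summable fun n => ‖c (n + 1) - c n‖ ^ 2

/-- The `ℓ₂(Δ)` norm `‖c‖ = ‖Δc‖_{ℓ₂}`. -/
noncomputable def dN (c : ℕ → ℂ) : ℝ := Real.sqrt (∑' n : ℕ, ‖c (n + 1) - c n‖ ^ 2)

/-- The domain of `A₁`: `c ∈ ℓ₂(Δ)` with `(f(n)c_n) ∈ ℓ₂(Δ)`. -/
def InDom (f : ℕ → ℝ) (c : ℕ → ℂ) : Prop :=
  InSp c ∧ InSp fun n => (f n : ℂ) * c n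

open Finset

noncomputable def cesaroMean (a : ℕ → ℝ) (n : ℕ) : ℝ := (∑ k ∈ range n, a k) / n

lemma natCast_mul_cesaroMean (a : ℕ → ℝ) (n : ℕ) : n * cesaroMean a n = ∑ k ∈ range n, a k := by
  rcases n.eq_zero_or_pos with rfl | hn
  · simp
  · unfold cesaroMean
    field_simp

lemma cesaroMean_succ_sq_sub_le (a : ℕ → ℝ) (n : ℕ) :
    cesaroMean a (n + 1) ^ 2 - 2 * cesaroMean a (n + 1) * a n ≤
      n * cesaroMean a n ^ 2 - (n + 1) * cesaroMean a (n + 1) ^ 2 := by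
  have hrec : a n = (n + 1) * cesaroMean a (n + 1) - n * cesaroMean a n := by
    have := natCast_mul_cesaroMean a (n + 1)
    push_cast at this
    rw [this, natCast_mul_cesaroMean, sum_range_succ]
    ring
  have hgap : n * cesaroMean a n ^ 2 - (n + 1) * cesaroMean a (n + 1) ^ 2 -
      (cesaroMean a (n + 1) ^ 2 - 2 * cesaroMean a (n + 1) * a n) =
      n * (cesaroMean a n - cesaroMean a (n + 1)) ^ 2 := by
    rw [hrec]; ring
  have : (0 : ℝ) ≤ n * (cesaroMean a n - cesaroMean a (n + 1)) ^ 2 := by positivity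
  linarith

lemma sum_range_cesaroMean_succ_sq_le (a : ℕ → ℝ) (N : ℕ) :
    ∑ n ∈ range N, cesaroMean a (n + 1) ^ 2 ≤
      2 * ∑ n ∈ range N, cesaroMean a (n + 1) * a n := by
  set g : ℕ → ℝ := fun n => n * cesaroMean a n ^ 2
  have hle : ∑ n ∈ range N, (cesaroMean a (n + 1) ^ 2 - 2 * (cesaroMean a (n + 1) * a n)) ≤
      ∑ n ∈ range N, (g n - g (n + 1)) :=
    sum_le_sum fun n _ => by simpa [g, mul_assoc] using cesaroMean_succ_sq_sub_le a n
  have hgN : 0 ≤ g N := by positivity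
  rw [sum_sub_distrib, ← mul_sum, sum_range_sub'] at hle
  simp only [g, CharP.cast_eq_zero, zero_mul] at hle hgN
  linarith

theorem sum_range_cesaroMean_sq_le (a : ℕ → ℝ) (N : ℕ) :
    ∑ n ∈ range N, cesaroMean a n ^ 2 ≤ 4 * ∑ n ∈ range N, a n ^ 2 := by
  set S := ∑ n ∈ range N, cesaroMean a (n + 1) ^ 2
  set P := ∑ n ∈ range N, cesaroMean a (n + 1) * a n
  set Q := ∑ n ∈ range N, a n ^ 2
  have hSP : S ≤ 2 * P := sum_range_cesaroMean_succ_sq_le a N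
  have hCS : P ^ 2 ≤ S * Q := sum_mul_sq_le_sq_mul_sq _ _ _
  have hS : 0 ≤ S := sum_nonneg fun n _ => sq_nonneg _
  have hQ : 0 ≤ Q := sum_nonneg fun n _ => sq_nonneg _
  have hSQ : S ≤ 4 * Q := by
    rcases hS.eq_or_lt with h | h
    · linarith
    · nlinarith
  calc ∑ n ∈ range N, cesaroMean a n ^ 2
      ≤ ∑ n ∈ range (N + 1), cesaroMean a n ^ 2 :=
        sum_range_succ (fun n => cesaroMean a n ^ 2) N ▸ le_add_of_nonneg_right (sq_nonneg _)
    _ = S := by simp [sum_range_succ', cesaroMean, S] -- `cesaroMean a 0 = 0` as `x / 0 = 0`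
    _ ≤ 4 * Q := hSQ

section SequenceSpace

variable {c d w : ℕ → ℂ}

lemma InSp.norm_le_sum (hc : InSp c) (n : ℕ) : ‖c n‖ ≤ ∑ k ∈ range n, ‖c (k + 1) - c k‖ := by
  have h := norm_sum_le (range n) fun k => c (k + 1) - c k
  rwa [sum_range_sub, hc.1, sub_zero] at h

lemma InSp.const_mul (hc : InSp c) (z : ℂ) : InSp fun n => z * c n :=
  ⟨by simp [hc.1], by simpa [← mul_sub, mul_pow] using hc.2.mul_left (‖z‖ ^ 2)⟩

lemma InSp.add (hc : InSp c) (hd : InSp d) : InSp fun n => c n + d n := by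
  refine ⟨by simp [hc.1, hd.1], .of_nonneg_of_le (fun _ => sq_nonneg _) (fun n => ?_)
    ((hc.2.add hd.2).mul_left 2)⟩
  calc ‖c (n + 1) + d (n + 1) - (c n + d n)‖ ^ 2
      = ‖(c (n + 1) - c n) + (d (n + 1) - d n)‖ ^ 2 := by ring_nf
    _ ≤ (‖c (n + 1) - c n‖ + ‖d (n + 1) - d n‖) ^ 2 := by gcongr; exact norm_add_le _ _
    _ ≤ 2 * (‖c (n + 1) - c n‖ ^ 2 + ‖d (n + 1) - d n‖ ^ 2) := add_sq_le

lemma norm_mul_sub_mul_le {K₁ K₂ : ℝ} (hc : InSp c) (hw : ∀ n, ‖w (n + 1)‖ ≤ K₁)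
    (hΔw : ∀ n : ℕ, n * ‖w (n + 1) - w n‖ ≤ K₂) (n : ℕ) :
    ‖w (n + 1) * c (n + 1) - w n * c n‖ ≤
      K₁ * ‖c (n + 1) - c n‖ + K₂ * cesaroMean (fun k => ‖c (k + 1) - c k‖) n := by
  have hmean : 0 ≤ cesaroMean (fun k => ‖c (k + 1) - c k‖) n :=
    div_nonneg (sum_nonneg fun _ _ => norm_nonneg _) n.cast_nonneg
  have hcn : ‖c n‖ * ‖w (n + 1) - w n‖ ≤ K₂ * cesaroMean (fun k => ‖c (k + 1) - c k‖) n :=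
    calc ‖c n‖ * ‖w (n + 1) - w n‖
        ≤ (n * cesaroMean (fun k => ‖c (k + 1) - c k‖) n) * ‖w (n + 1) - w n‖ := by
          rw [natCast_mul_cesaroMean]
          exact mul_le_mul_of_nonneg_right (hc.norm_le_sum n) (norm_nonneg _)
      _ = cesaroMean (fun k => ‖c (k + 1) - c k‖) n * (n * ‖w (n + 1) - w n‖) := by ring
      _ ≤ K₂ * cesaroMean (fun k => ‖c (k + 1) - c k‖) n := by
          rw [mul_comm K₂]; exact mul_le_mul_of_nonneg_left (hΔw n) hmean
  calc ‖w (n + 1) * c (n + 1) - w n * c n‖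
      = ‖w (n + 1) * (c (n + 1) - c n) + c n * (w (n + 1) - w n)‖ := by ring_nf
    _ ≤ ‖w (n + 1)‖ * ‖c (n + 1) - c n‖ + ‖c n‖ * ‖w (n + 1) - w n‖ := by
        simpa only [norm_mul] using
          norm_add_le (w (n + 1) * (c (n + 1) - c n)) (c n * (w (n + 1) - w n))
    _ ≤ K₁ * ‖c (n + 1) - c n‖ + K₂ * cesaroMean (fun k => ‖c (k + 1) - c k‖) n :=
        add_le_add (mul_le_mul_of_nonneg_right (hw n) (norm_nonneg _)) hcn

theorem InSp.mul_of_bounded {K₁ K₂ : ℝ} (hc : InSp c) (hw : ∀ n, ‖w (n + 1)‖ ≤ K₁)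
    (hΔw : ∀ n : ℕ, n * ‖w (n + 1) - w n‖ ≤ K₂) :
    InSp (fun n => w n * c n) ∧ dN (fun n => w n * c n) ≤ √(2 * K₁ ^ 2 + 8 * K₂ ^ 2) * dN c := by
  set a : ℕ → ℝ := fun k => ‖c (k + 1) - c k‖
  have hsq : ∀ n, ‖w (n + 1) * c (n + 1) - w n * c n‖ ^ 2 ≤
      2 * ((K₁ * a n) ^ 2 + (K₂ * cesaroMean a n) ^ 2) := fun n =>
    (pow_le_pow_left₀ (norm_nonneg _) (norm_mul_sub_mul_le hc hw hΔw n) 2).trans add_sq_le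
  have hpartial : ∀ N, ∑ n ∈ range N, ‖w (n + 1) * c (n + 1) - w n * c n‖ ^ 2 ≤
      (2 * K₁ ^ 2 + 8 * K₂ ^ 2) * ∑' n, ‖c (n + 1) - c n‖ ^ 2 := fun N =>
    calc ∑ n ∈ range N, ‖w (n + 1) * c (n + 1) - w n * c n‖ ^ 2
        ≤ ∑ n ∈ range N, 2 * ((K₁ * a n) ^ 2 + (K₂ * cesaroMean a n) ^ 2) :=
          sum_le_sum fun n _ => hsq n
      _ = 2 * K₁ ^ 2 * ∑ n ∈ range N, a n ^ 2 + 2 * K₂ ^ 2 * ∑ n ∈ range N, cesaroMean a n ^ 2 := by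
          simp only [mul_pow, ← mul_sum, sum_add_distrib]; ring
      _ ≤ 2 * K₁ ^ 2 * ∑ n ∈ range N, a n ^ 2 + 2 * K₂ ^ 2 * (4 * ∑ n ∈ range N, a n ^ 2) := by
          gcongr; exact sum_range_cesaroMean_sq_le a N
      _ = (2 * K₁ ^ 2 + 8 * K₂ ^ 2) * ∑ n ∈ range N, a n ^ 2 := by ring
      _ ≤ (2 * K₁ ^ 2 + 8 * K₂ ^ 2) * ∑' n, ‖c (n + 1) - c n‖ ^ 2 := by
          gcongr; exact hc.2.sum_le_tsum _ fun _ _ => sq_nonneg _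
  have hsum := summable_of_sum_range_le (fun _ => sq_nonneg _) hpartial
  refine ⟨⟨by simp [hc.1], hsum⟩, ?_⟩
  rw [dN, dN, ← Real.sqrt_mul (by positivity)]
  exact Real.sqrt_le_sqrt (hsum.tsum_le_of_sum_range_le hpartial)

end SequenceSpace

lemma norm_inv_sub_inv_le {𝕜 : Type*} [NormedDivisionRing 𝕜] {x y : 𝕜} {δ : ℝ} (hδ : 0 < δ)
    (hx : δ ≤ ‖x‖) (hy : δ ≤ ‖y‖) : ‖x⁻¹ - y⁻¹‖ ≤ ‖x - y‖ / δ ^ 2 := by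
  have hx0 : x ≠ 0 := norm_pos_iff.1 (hδ.trans_le hx)
  have hy0 : y ≠ 0 := norm_pos_iff.1 (hδ.trans_le hy)
  calc ‖x⁻¹ - y⁻¹‖ = ‖x - y‖ * (‖x‖⁻¹ * ‖y‖⁻¹) := by
        rw [inv_sub_inv' hx0 hy0, norm_mul, norm_mul, norm_inv, norm_inv, norm_sub_rev y x]; ring
    _ ≤ ‖x - y‖ * (δ⁻¹ * δ⁻¹) := by gcongr
    _ = ‖x - y‖ / δ ^ 2 := by ring

theorem InSp.div_of_le_norm {c X : ℕ → ℂ} {δ C : ℝ} (hc : InSp c) (hδ : 0 < δ)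
    (hX : ∀ n, 1 ≤ n → δ ≤ ‖X n‖) (hΔX : ∀ n : ℕ, n * ‖X (n + 1) - X n‖ ≤ C) :
    InSp (fun n => c n / X n) ∧
      dN (fun n => c n / X n) ≤ √(2 * (δ⁻¹) ^ 2 + 8 * (C / δ ^ 2) ^ 2) * dN c := by
  have hdiv : (fun n => c n / X n) = fun n => (X n)⁻¹ * c n := funext fun n => div_eq_inv_mul _ _
  rw [hdiv]
  refine hc.mul_of_bounded (fun n => ?_) (fun n => ?_)
  · rw [norm_inv]
    exact inv_anti₀ hδ (hX (n + 1) (Nat.le_add_left 1 n))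
  · rcases n.eq_zero_or_pos with rfl | hn
    · simpa using div_nonneg (by simpa using hΔX 0) (sq_nonneg δ)
    · calc (n : ℝ) * ‖(X (n + 1))⁻¹ - (X n)⁻¹‖ ≤ n * (‖X (n + 1) - X n‖ / δ ^ 2) := by
            gcongr; exact norm_inv_sub_inv_le hδ (hX _ (Nat.le_add_left 1 n)) (hX n hn)
        _ = n * ‖X (n + 1) - X n‖ / δ ^ 2 := by ring
        _ ≤ C / δ ^ 2 := by gcongr; exact hΔX n

lemma exists_pos_forall_le_of_tendsto {u : ℕ → ℝ} (hu : Tendsto u atTop atTop)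
    (hpos : ∀ n, 1 ≤ n → 0 < u n) : ∃ δ, 0 < δ ∧ ∀ n, 1 ≤ n → δ ≤ u n := by
  have hshift : Tendsto (fun k => u (k + 1)) cofinite atTop := by
    rw [Nat.cofinite_eq_atTop]; exact (tendsto_add_atTop_iff_nat 1).2 hu
  obtain ⟨k, hk⟩ := hshift.exists_forall_le
  refine ⟨u (k + 1), hpos _ (Nat.le_add_left 1 k), fun n hn => ?_⟩
  obtain ⟨m, rfl⟩ := Nat.exists_eq_add_of_le' hn
  exact hk m

lemma tendsto_norm_I_mul_sub {f : ℕ → ℝ} (hf : Tendsto f atTop atTop) (lam : ℂ) :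
    Tendsto (fun n => ‖Complex.I * f n - lam‖) atTop atTop := by
  refine tendsto_atTop_mono (fun n => ?_) (tendsto_atTop_add_const_right _ (-‖lam‖) hf)
  calc f n + -‖lam‖ ≤ ‖Complex.I * f n‖ - ‖lam‖ := by
        simpa [Complex.norm_real] using le_abs_self (f n)
    _ ≤ ‖Complex.I * f n - lam‖ := norm_sub_norm_le _ _

lemma norm_I_mul_sub_sub_I_mul_sub (x y : ℝ) (lam : ℂ) :
    ‖(Complex.I * x - lam) - (Complex.I * y - lam)‖ = |x - y| := by
  rw [sub_sub_sub_cancel_right, ← mul_sub, ← Complex.ofReal_sub, norm_mul, Complex.norm_I,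
    one_mul, Complex.norm_real, Real.norm_eq_abs]

lemma natCast_mul_abs_succ_sub_le {f : ℕ → ℝ} {C : ℝ}
    (hC : ∀ n : ℕ, 2 ≤ n → (n : ℝ) * |f n - f (n - 1)| ≤ C) (n : ℕ) :
    n * |f (n + 1) - f n| ≤ C := by
  rcases n.eq_zero_or_pos with rfl | hn
  · simpa using (by positivity : (0 : ℝ) ≤ 2 * |f 2 - f 1|).trans (hC 2 le_rfl)
  · calc (n : ℝ) * |f (n + 1) - f n| ≤ ((n + 1 : ℕ) : ℝ) * |f (n + 1) - f (n + 1 - 1)| := by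
          push_cast; gcongr; linarith
      _ ≤ C := hC (n + 1) (by omega)

lemma inSp_single {n : ℕ} (hn : n ≠ 0) (z : ℂ) : InSp (Pi.single n z) := by
  refine ⟨Pi.single_eq_of_ne' hn _, summable_of_ne_finset_zero (s := range (n + 1)) fun m hm => ?_⟩
  rw [mem_range, not_lt] at hm
  rw [Pi.single_eq_of_ne (by omega : m + 1 ≠ n), Pi.single_eq_of_ne (by omega : m ≠ n)]
  simp

lemma exists_inDom_eigenvector (f : ℕ → ℝ) (g : ℕ → ℂ) {n : ℕ} (hn : 1 ≤ n) :
    ∃ c : ℕ → ℂ, InDom f c ∧ c ≠ 0 ∧ (fun m => g m * c m) = fun m => g n * c m := by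
  have hmul : ∀ h : ℕ → ℂ, (fun m => h m * (Pi.single n 1 : ℕ → ℂ) m) = Pi.single n (h n) :=
    fun h => funext fun m => by rw [← Pi.single_mul_right_apply, mul_one]
  refine ⟨Pi.single n 1, ⟨inSp_single (by omega) 1, ?_⟩, by simp, ?_⟩
  · exact (hmul fun m => (f m : ℂ)) ▸ inSp_single (by omega) _
  · rw [hmul g, hmul fun _ => g n]

lemma exists_eq_of_eigenvector {g c : ℕ → ℂ} {lam : ℂ} (hc : c 0 = 0) (hne : c ≠ 0)
    (h : (fun m => g m * c m) = fun m => lam * c m) : ∃ n, 1 ≤ n ∧ lam = g n := by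
  obtain ⟨n, hn⟩ := Function.ne_iff.1 hne
  refine ⟨n, Nat.one_le_iff_ne_zero.2 fun h0 => hn (h0 ▸ hc), ?_⟩
  exact (mul_right_cancel₀ hn (congrFun h n)).symm

lemma mul_div_cancel_of_apply_zero {X c : ℕ → ℂ} (hX : ∀ n, 1 ≤ n → X n ≠ 0) (hc : c 0 = 0)
    (n : ℕ) :
    X n * (c n / X n) = c n := by
  rcases n.eq_zero_or_pos with rfl | hn
  · simp [hc]
  · exact mul_div_cancel₀ _ (hX n hn)

lemma eq_div_of_mul_eq_of_apply_zero {X c d : ℕ → ℂ} (hX : ∀ n, 1 ≤ n → X n ≠ 0) (hd : d 0 = 0)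
    (h : (fun n => X n * d n) = c) : d = fun n => c n / X n := by
  ext n
  rw [← h]
  rcases n.eq_zero_or_pos with rfl | hn
  · simp [hd]
  · exact (mul_div_cancel_left₀ _ (hX n hn)).symm

lemma inDom_of_mul_eq {f : ℕ → ℝ} {lam : ℂ} {c d : ℕ → ℂ} (hc : InSp c) (hd : InSp d)
    (h : ∀ n, (Complex.I * f n - lam) * d n = c n) : InDom f d := by
  have hfd : (fun n => (f n : ℂ) * d n) = fun n => -Complex.I * (c n + lam * d n) :=
    funext fun n => by linear_combination (-Complex.I) * h n + (f n * d n) * Complex.I_sq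
  exact ⟨hd, hfd ▸ (hc.add (hd.const_mul lam)).const_mul (-Complex.I)⟩

/-- For `f ∈ S₁`, the operator `(A₁c)_n = i f(n) c_n` on `ℓ₂(Δ)` with its natural
domain has `σ(A₁) = σ_p(A₁) = {i f(n) : n ≥ 1}`: every `i f(n)` is an eigenvalue,
every eigenvalue is some `i f(n)`, and for `λ ∉ {i f(n)}` the resolvent exists, is
bounded and is the diagonal operator `c ↦ (c_n/(i f(n) - λ))`. -/
theorem stmt10 (f : ℕ → ℝ) (hf : Tendsto f atTop atTop) (C : ℝ)
    (hC : ∀ n : ℕ, 2 ≤ n → (n : ℝ) * |f n - f (n - 1)| ≤ C) :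
    (∀ n : ℕ, 1 ≤ n → ∃ c : ℕ → ℂ, InDom f c ∧ c ≠ 0 ∧
        (fun m => Complex.I * (f m : ℂ) * c m) = fun m => Complex.I * (f n : ℂ) * c m) ∧
    (∀ (lam : ℂ) (c : ℕ → ℂ), InDom f c → c ≠ 0 →
        (fun m => Complex.I * (f m : ℂ) * c m) = (fun m => lam * c m) →
        ∃ n : ℕ, 1 ≤ n ∧ lam = Complex.I * (f n : ℂ)) ∧
    (∀ lam : ℂ, (∀ n : ℕ, 1 ≤ n → lam ≠ Complex.I * (f n : ℂ)) →
      (∀ c : ℕ → ℂ, InSp c →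
        InDom f (fun n => c n / (Complex.I * (f n : ℂ) - lam)) ∧
        (fun n => (Complex.I * (f n : ℂ) - lam) * (c n / (Complex.I * (f n : ℂ) - lam))) = c ∧
        (∀ d : ℕ → ℂ, InDom f d →
          (fun n => (Complex.I * (f n : ℂ) - lam) * d n) = c →
          d = fun n => c n / (Complex.I * (f n : ℂ) - lam))) ∧
      ∃ M : ℝ, ∀ c : ℕ → ℂ, InSp c →
        dN (fun n => c n / (Complex.I * (f n : ℂ) - lam)) ≤ M * dN c) := by
  refine ⟨fun n hn => exists_inDom_eigenvector f _ hn,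
    fun lam c hc hne h => exists_eq_of_eigenvector hc.1.1 hne h, fun lam hlam => ?_⟩
  have hX : ∀ n, 1 ≤ n → Complex.I * f n - lam ≠ 0 := fun n hn => sub_ne_zero.2 (hlam n hn).symm
  obtain ⟨δ, hδ, hδX⟩ := exists_pos_forall_le_of_tendsto (tendsto_norm_I_mul_sub hf lam)
    fun n hn => norm_pos_iff.2 (hX n hn)
  have hΔX : ∀ n : ℕ, n * ‖(Complex.I * f (n + 1) - lam) - (Complex.I * f n - lam)‖ ≤ C :=
    fun n => norm_I_mul_sub_sub_I_mul_sub (f (n + 1)) (f n) lam ▸ natCast_mul_abs_succ_sub_le hC n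
  have hres := fun c (hc : InSp c) => hc.div_of_le_norm hδ hδX hΔX
  have hcancel := fun c (hc : InSp c) => mul_div_cancel_of_apply_zero hX hc.1
  exact ⟨fun c hc => ⟨inDom_of_mul_eq hc (hres c hc).1 (hcancel c hc), funext (hcancel c hc),
    fun d hd => eq_div_of_mul_eq_of_apply_zero hX hd.1.1⟩, _, fun c hc => (hres c hc).2⟩
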